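/- Let X, X', X̃' be topological spaces, p : X → X' continuous, and let π' : X̃' → X' be a covering map whose total space X̃' is nonempty, path-connected and simply connected (a universal cover of X'). Let X̃ = {(x, x̃') ∈ X × X̃' : p(x) = π'(x̃')} be the fiber product with the subspace topology, and π : X̃ → X the first projection. Fix a basepoint x̃₀ = (x₀, x̃'₀) ∈ X̃. Then the image of the induced homomorphism π_* : π₁(X̃, x̃₀) → π₁(X, x₀) is exactly the kernel of the induced homomorphism p_* : π₁(X, x₀) → π₁(X', p(x₀)); that is, π_*(π₁(X̃, x̃₀)) = ker p_*. -/

import Mathlib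

/-!
If `π' : X̃' → X'` is a universal cover (a covering map with nonempty, path-connected,
simply connected total space) and `p : X → X'` is continuous, then for the fiber product
`X̃ = X ×_{X'} X̃'` with first projection `π : X̃ → X`, the image of
`π_* : π₁(X̃, x̃₀) → π₁(X, x₀)` is exactly the kernel of `p_* : π₁(X, x₀) → π₁(X', p(x₀))`.
-/

open CategoryTheory

section CoveringLiftingAux

open Set unitInterval

section LiftInfra

variable {E B : Type*} [TopologicalSpace E] [TopologicalSpace B] {p : E → B}

/-- Pasting lemma for `ContinuousOn` on a union of two closed sets. -/
lemma continuousOn_union_of_isClosed {X Y : Type*} [TopologicalSpace X] [TopologicalSpace Y]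
    {f : X → Y} {s t : Set X} (hs : IsClosed s) (ht : IsClosed t)
    (hfs : ContinuousOn f s) (hft : ContinuousOn f t) : ContinuousOn f (s ∪ t) := by
  intro x hx
  have aux : ∀ u : Set X, IsClosed u → ContinuousOn f u → ContinuousWithinAt f u x := by
    intro u hu hfu
    by_cases hxu : x ∈ u
    · exact hfu x hxu
    · exact continuousWithinAt_of_notMem_closure (by rwa [hu.closure_eq])
  exact (aux s hs hfs).union (aux t ht hft)

/-- Extension step: a partial lift on a closed set `s` extends over a closed set `q`
which is mapped into the base set of a trivialization, provided the overlap is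
preconnected and contains a point. -/
lemma IsCoveringMap.extend_lift {X : Type*} [TopologicalSpace X] (hp : IsCoveringMap p)
    {H : X → B} (hH : Continuous H) {s q : Set X}
    (hs : IsClosed s) (hq : IsClosed q) (hsq : _root_.IsPreconnected (s ∩ q))
    {z₀ : X} (hz₀ : z₀ ∈ s ∩ q)
    {F : Type*} [TopologicalSpace F] (T : Bundle.Trivialization F p) (hQ : MapsTo H q T.baseSet)
    {Γ : X → E} (hΓc : ContinuousOn Γ s) (hΓl : ∀ z ∈ s, p (Γ z) = H z) :
    ∃ Γ' : X → E, ContinuousOn Γ' (s ∪ q) ∧ (∀ z ∈ s ∪ q, p (Γ' z) = H z) ∧ EqOn Γ' Γ s := by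
  set e : E := Γ z₀ with he_def
  have hpe : p e = H z₀ := hΓl z₀ hz₀.1
  have heb : p e ∈ T.baseSet := by rw [hpe]; exact hQ hz₀.2
  have hes : e ∈ T.source := T.mem_source.2 heb
  set sec : B → E := fun b => T.toPartialHomeomorph.symm (b, (T e).2) with hsec_def
  have hseccont : ContinuousOn sec T.baseSet := by
    refine T.toPartialHomeomorph.continuousOn_symm.comp
      (Continuous.continuousOn (by continuity)) ?_
    intro b hb
    exact T.mem_target.2 hb
  have hsecp : ∀ b ∈ T.baseSet, p (sec b) = b := fun b hb => T.proj_symm_apply (T.mem_target.2 hb)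
  have hsece : sec (p e) = e := by
    have h1 : ((p e : B), (T e).2) = T e := Prod.ext (T.coe_fst hes).symm rfl
    rw [hsec_def]; dsimp only; rw [h1]
    exact T.toPartialHomeomorph.left_inv hes
  have hsecHcont : ContinuousOn (fun z => sec (H z)) q :=
    hseccont.comp hH.continuousOn hQ
  have key : EqOn Γ (fun z => sec (H z)) (s ∩ q) := by
    refine hp.eqOn_of_comp_eqOn hsq (hΓc.mono inter_subset_left)
      (hsecHcont.mono inter_subset_right) (fun z hz => ?_) hz₀ ?_
    · simp only [Function.comp_apply]
      rw [hΓl z hz.1, hsecp (H z) (hQ hz.2)]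
    · rw [← he_def, ← hpe] at *
      exact hsece.symm
  classical
  refine ⟨fun z => if z ∈ s then Γ z else sec (H z), ?_, ?_, fun z hz => if_pos hz⟩
  · have eq2 : EqOn (fun z => if z ∈ s then Γ z else sec (H z)) (fun z => sec (H z)) q := by
      intro z hz
      by_cases hzs : z ∈ s
      · simp only [if_pos hzs]; exact key ⟨hzs, hz⟩
      · simp only [if_neg hzs]
    exact continuousOn_union_of_isClosed hs hq
      (hΓc.congr fun z hz => if_pos hz) (hsecHcont.congr eq2)
  · rintro z (hz | hz)
    · simp only [if_pos hz]; exact hΓl z hz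
    · by_cases hzs : z ∈ s
      · simp only [if_pos hzs]; exact hΓl z hzs
      · simp only [if_neg hzs]; exact hsecp (H z) (hQ hz)

end LiftInfra

lemma isClosed_Icc_I (a b : I) : IsClosed (Icc a b) := by
  have h : (Icc a b : Set I) = Subtype.val ⁻¹' (Icc (a : ℝ) (b : ℝ)) := by
    ext z
    simp only [mem_Icc, mem_preimage, Subtype.coe_le_coe]
  rw [h]
  exact IsClosed.preimage continuous_subtype_val isClosed_Icc

lemma isPreconnected_Icc_I (a b : I) : _root_.IsPreconnected (Icc a b) := by
  rcases le_or_gt a b with hab | hab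
  · have h : (Icc a b : Set I) = Set.projIcc 0 1 zero_le_one '' Icc (a : ℝ) (b : ℝ) := by
      ext z
      constructor
      · intro hz
        refine ⟨(z : ℝ), ⟨Subtype.coe_le_coe.2 hz.1, Subtype.coe_le_coe.2 hz.2⟩, ?_⟩
        simp [Set.projIcc_val]
      · rintro ⟨x, hx, rfl⟩
        have hx' : x ∈ Icc (0:ℝ) 1 :=
          ⟨le_trans a.2.1 hx.1, le_trans hx.2 b.2.2⟩
        constructor
        · rw [← Subtype.coe_le_coe, Set.projIcc_of_mem zero_le_one hx']
          exact hx.1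
        · rw [← Subtype.coe_le_coe, Set.projIcc_of_mem zero_le_one hx']
          exact hx.2
    rw [h]
    exact isPreconnected_Icc.image _ continuous_projIcc.continuousOn
  · rw [Icc_eq_empty hab.not_ge]
    exact isPreconnected_empty

section SquareLift

variable {E B : Type*} [TopologicalSpace E] [TopologicalSpace B] {p : E → B}

theorem IsCoveringMap.exists_square_lift (hp : IsCoveringMap p) (H : C(I × I, B)) (e₀ : E)
    (he₀ : p e₀ = H (0, 0)) :
    ∃ G : I × I → E, Continuous G ∧ (∀ z, p (G z) = H z) ∧ G (0, 0) = e₀ := by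
  classical
  -- charts
  have hne : ∀ z : I × I, Nonempty (p ⁻¹' {H z}) := by
    obtain ⟨f, hf1, hf0⟩ := hp.exists_path_lifts
      (H.comp ⟨fun t => ((0:I), t), by fun_prop⟩) e₀ he₀.symm
    intro z
    exact ⟨⟨hp.liftHomotopy H f (fun a => (congrFun hf1 a).symm) z,
      congrFun (hp.liftHomotopy_lifts H f _) z⟩⟩
  have main : ∃ δ : ℝ, 0 < δ ∧ ∀ z : I × I, ∃ (Fi : Type _) (_ : TopologicalSpace Fi)
      (T : Bundle.Trivialization Fi p), MapsTo H (Metric.ball z δ) T.baseSet := by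
    obtain ⟨δ, hδ, hball⟩ := lebesgue_number_lemma_of_metric
      (isCompact_univ : IsCompact (univ : Set (I × I)))
      (c := fun z : I × I => H ⁻¹' ((hp (H z)).toTrivialization.baseSet))
      (fun z => ((hp (H z)).toTrivialization.open_baseSet).preimage H.continuous)
      (fun z _ => Set.mem_iUnion.2 ⟨z, (hp (H z)).mem_toTrivialization_baseSet⟩)
    refine ⟨δ, hδ, fun z => ?_⟩
    obtain ⟨i, hi⟩ := hball z (mem_univ z)
    exact ⟨_, _, (hp (H i)).toTrivialization, fun w hw => hi hw⟩
  obtain ⟨δ, hδ, hcharts⟩ := main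
  -- grid size
  obtain ⟨n, hn⟩ := exists_nat_gt (max 1 (1 / δ))
  have hν : (0:ℝ) < n := lt_of_lt_of_le one_pos ((le_max_left 1 (1/δ)).trans hn.le)
  have hn0 : 0 < n := by exact_mod_cast hν

  set ν : ℝ := (n : ℝ) with hν_def
  have h1ν : 1 / ν < δ := by
    rw [div_lt_iff₀ hν]
    have h2 : 1 / δ < ν := lt_of_le_of_lt (le_max_right 1 (1/δ)) hn
    rw [div_lt_iff₀ hδ] at h2
    nlinarith
  -- grid points
  have hdiv_nonneg : ∀ k : ℕ, (0:ℝ) ≤ k / ν := fun k => by positivity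
  obtain ⟨a, hcoe, ha0, han, ha_mono⟩ : ∃ a : ℕ → I,
      (∀ k, k ≤ n → ((a k : ℝ)) = k / ν) ∧ a 0 = 0 ∧ a n = 1 ∧ (∀ m, a m ≤ a (m+1)) := by
    have hstep : ∀ m : ℕ, (m:ℝ)/ν ≤ ((m+1 : ℕ):ℝ)/ν := by
      intro m
      gcongr
      push_cast; linarith
    refine ⟨fun k => ⟨min ((k : ℝ) / ν) 1, ⟨le_min (hdiv_nonneg k) zero_le_one,
      min_le_right _ _⟩⟩, fun k hk => ?_, ?_, ?_, fun m => ?_⟩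
    · exact min_eq_left ((div_le_one hν).2 (by rw [hν_def]; exact_mod_cast hk))
    · apply Subtype.ext; simp
    · apply Subtype.ext
      simp only
      rw [div_self (ne_of_gt hν)]
      simp
    · exact Subtype.mk_le_mk.2 (min_le_min (hstep m) le_rfl)
  have hstep : ∀ m : ℕ, (m:ℝ)/ν ≤ ((m+1 : ℕ):ℝ)/ν := by
    intro m
    gcongr
    push_cast; linarith
  have mem_Icc_a : ∀ {x : I} {i j : ℕ}, i ≤ n → j ≤ n →
      (x ∈ Icc (a i) (a j) ↔ ((i:ℝ)/ν ≤ (x:ℝ) ∧ (x:ℝ) ≤ (j:ℝ)/ν)) := by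
    intro x i j hi hj
    rw [mem_Icc, ← Subtype.coe_le_coe, ← Subtype.coe_le_coe, hcoe i hi, hcoe j hj]
  -- chart for each grid square
  have hQT : ∀ k l : ℕ, k < n → l < n → ∃ (Fi : Type _) (_ : TopologicalSpace Fi)
      (T : Bundle.Trivialization Fi p),
      MapsTo H (Icc (a k) (a (k+1)) ×ˢ Icc (a l) (a (l+1))) T.baseSet := by
    intro k l hk hl
    obtain ⟨Fi, inst, T, hT⟩ := hcharts (a k, a l)
    refine ⟨Fi, inst, T, hT.mono_left ?_⟩
    intro z hz
    rw [mem_prod] at hz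
    have h1 := (mem_Icc_a hk.le (Nat.succ_le_of_lt hk)).1 hz.1
    have h2 := (mem_Icc_a hl.le (Nat.succ_le_of_lt hl)).1 hz.2
    rw [Metric.mem_ball, Prod.dist_eq]
    have key : ∀ (x : I) (m : ℕ), m ≤ n → (m:ℝ)/ν ≤ (x:ℝ) → (x:ℝ) ≤ ((m+1:ℕ):ℝ)/ν →
        dist x (a m) < δ := by
      intro x m hm hm1 hm2
      rw [Subtype.dist_eq, Real.dist_eq, hcoe m hm, abs_sub_lt_iff]
      have hmm : ((m+1:ℕ):ℝ)/ν = (m:ℝ)/ν + 1/ν := by push_cast; ring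
      constructor <;> linarith
    exact max_lt (key z.1 k hk.le h1.1 h1.2) (key z.2 l hl.le h2.1 h2.2)
  -- regions
  set Row : ℕ → Set (I × I) := fun l => {z | ((z.2 : I) : ℝ) ≤ l / ν} with hRow_def
  set K : ℕ → ℕ → Set (I × I) := fun l k =>
    {z | ((z.1 : I) : ℝ) ≤ k / ν ∧ ((z.2 : I) : ℝ) ≤ ((l+1:ℕ):ℝ) / ν} with hK_def
  have hRow_closed : ∀ l, IsClosed (Row l) :=
    fun l => isClosed_le (continuous_subtype_val.comp continuous_snd) continuous_const
  have hK_closed : ∀ l k, IsClosed (K l k) := fun l k =>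
    IsClosed.inter (isClosed_le (continuous_subtype_val.comp continuous_fst) continuous_const)
      (isClosed_le (continuous_subtype_val.comp continuous_snd) continuous_const)
  -- the lifting predicate
  set LiftOn : Set (I × I) → Prop := fun s =>
    ∃ Γ : I × I → E, ContinuousOn Γ s ∧ (∀ z ∈ s, p (Γ z) = H z) ∧ Γ (0, 0) = e₀
    with hLiftOn_def
  have hz00 : ∀ l k, ((0:I), (0:I)) ∈ Row l ∪ K l k := fun l k =>
    Or.inl (by simp only [hRow_def, mem_setOf_eq, Icc.coe_zero]; exact hdiv_nonneg l)
  -- generic extension step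
  have step : ∀ (s : Set (I × I)) (k' l' : ℕ), k' < n → l' < n →
      ∀ (q : Set (I × I)), IsClosed s → q ⊆ Icc (a k') (a (k'+1)) ×ˢ Icc (a l') (a (l'+1)) →
      IsClosed q → _root_.IsPreconnected (s ∩ q) → (∀ z₀, z₀ ∈ s ∩ q → ((0:I),(0:I)) ∈ s →
      LiftOn s → LiftOn (s ∪ q)) := by
    intro s k' l' hk' hl' q hs hqsub hq hsq z₀ hz₀ h00 ⟨Γ, hΓc, hΓl, hΓ0⟩
    obtain ⟨Fi, inst, T, hT⟩ := hQT k' l' hk' hl'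
    obtain ⟨Γ', h1, h2, h3⟩ := hp.extend_lift H.continuous hs hq hsq hz₀ T
      (hT.mono_left hqsub) hΓc hΓl
    exact ⟨Γ', h1, h2, by rw [h3 h00]; exact hΓ0⟩

  set Bot : ℕ → Set (I × I) := fun k =>
    {z | ((z.1 : I) : ℝ) ≤ k / ν ∧ ((z.2 : I) : ℝ) ≤ 0} with hBot_def
  have hBot_closed : ∀ k, IsClosed (Bot k) := fun k =>
    IsClosed.inter (isClosed_le (continuous_subtype_val.comp continuous_fst) continuous_const)
      (isClosed_le (continuous_subtype_val.comp continuous_snd) continuous_const)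
  have prodIcc_preconn : ∀ i j i' j' : ℕ, _root_.IsPreconnected
      ((Icc (a i) (a j) ×ˢ Icc (a i') (a j') : Set (I × I))) :=
    fun _ _ _ _ => (isPreconnected_Icc_I _ _).prod (isPreconnected_Icc_I _ _)
  have hqclosed : ∀ i j i' j' : ℕ,
      IsClosed ((Icc (a i) (a j) ×ˢ Icc (a i') (a j') : Set (I × I))) :=
    fun _ _ _ _ => (isClosed_Icc_I _ _).prod (isClosed_Icc_I _ _)
  -- bottom edge induction
  have bot : ∀ k, k ≤ n → LiftOn (Bot k) := by
    intro k
    induction k with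
    | zero =>
      intro _
      refine ⟨fun _ => e₀, continuousOn_const, ?_, rfl⟩
      rintro z ⟨h1, h2⟩
      have hz1 : z.1 = 0 := Subtype.ext (le_antisymm (by simpa using h1) z.1.2.1)
      have hz2 : z.2 = 0 := Subtype.ext (le_antisymm h2 z.2.2.1)
      have hz : z = ((0:I), (0:I)) := Prod.ext hz1 hz2
      rw [hz, he₀]
    | succ k ih =>
      intro hk1
      have hk : k < n := hk1
      have e1 : ((a k : ℝ)) = k / ν := hcoe k hk.le
      have e2 : ((a (k+1) : ℝ)) = ((k+1:ℕ):ℝ) / ν := hcoe (k+1) hk1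
      have e3 : ((a 0 : ℝ)) = 0 := by rw [ha0]; simp
      have hoverlap : Bot k ∩ (Icc (a k) (a (k+1)) ×ˢ Icc (a 0) (a 0))
          = Icc (a k) (a k) ×ˢ Icc (a 0) (a 0) := by
        ext z
        simp only [hBot_def, mem_inter_iff, mem_setOf_eq, mem_prod, mem_Icc,
          ← Subtype.coe_le_coe, e1, e2, e3]
        constructor
        · rintro ⟨⟨hb1, hb2⟩, ⟨hq1, hq2⟩, hq3, hq4⟩
          exact ⟨⟨hq1, hb1⟩, hq3, hq4⟩
        · rintro ⟨⟨h1, h2⟩, h3, h4⟩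
          exact ⟨⟨h2, by linarith⟩, ⟨h1, by linarith [hstep k]⟩, h3, h4⟩
      have hregion : Bot (k+1) = Bot k ∪ (Icc (a k) (a (k+1)) ×ˢ Icc (a 0) (a 0)) := by
        ext z
        simp only [hBot_def, mem_union, mem_setOf_eq, mem_prod, mem_Icc,
          ← Subtype.coe_le_coe, e1, e2, e3]
        constructor
        · rintro ⟨h1, h2⟩
          rcases le_total ((z.1 : I) : ℝ) (k / ν) with h | h
          · exact Or.inl ⟨h, h2⟩
          · exact Or.inr ⟨⟨h, h1⟩, ⟨z.2.2.1, h2⟩⟩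
        · rintro (⟨h1, h2⟩ | ⟨⟨h1, h2⟩, h3, h4⟩)
          · exact ⟨by linarith [hstep k], h2⟩
          · exact ⟨h2, h4⟩
      rw [hregion]
      exact step (Bot k) k 0 hk hn0 (Icc (a k) (a (k+1)) ×ˢ Icc (a 0) (a 0)) (hBot_closed k)
        (prod_mono (Subset.refl _) (Icc_subset_Icc le_rfl (ha_mono 0))) (hqclosed k (k+1) 0 0)
        (by rw [hoverlap]; exact prodIcc_preconn k k 0 0) (a k, a 0)
        (by rw [hoverlap]; exact ⟨⟨le_rfl, le_rfl⟩, le_rfl, le_rfl⟩)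
        ⟨by simpa using hdiv_nonneg k, by simp⟩ (ih hk.le)

  have h00row : ∀ l, ((0:I),(0:I)) ∈ Row l := fun l => by
    simp only [hRow_def, mem_setOf_eq, Icc.coe_zero]; exact hdiv_nonneg l
  -- row induction
  have row : ∀ l, l ≤ n → LiftOn (Row l) := by
    intro l
    induction l with
    | zero =>
      intro _
      have hBn : Row 0 = Bot n := by
        ext z
        simp only [hRow_def, hBot_def, mem_setOf_eq, Nat.cast_zero, zero_div]
        constructor
        · intro h
          refine ⟨?_, h⟩
          rw [div_self (ne_of_gt hν)]
          exact z.1.2.2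
        · rintro ⟨h1, h2⟩
          exact h2
      rw [hBn]
      exact bot n le_rfl
    | succ l ihl =>
      intro hl1
      have hl : l < n := hl1
      have hrow := ihl hl.le
      have el : ((a l : ℝ)) = l / ν := hcoe l hl.le
      have el1 : ((a (l+1) : ℝ)) = ((l+1:ℕ):ℝ) / ν := hcoe (l+1) hl1
      have inner : ∀ k, k ≤ n → LiftOn (Row l ∪ K l k) := by
        intro k
        induction k with
        | zero =>
          intro _
          have e0 : ((a 0 : ℝ)) = 0 := by rw [ha0]; simp
          have hoverlap : Row l ∩ (Icc (a 0) (a 0) ×ˢ Icc (a l) (a (l+1)))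
              = Icc (a 0) (a 0) ×ˢ Icc (a l) (a l) := by
            ext z
            simp only [hRow_def, mem_inter_iff, mem_setOf_eq, mem_prod, mem_Icc,
              ← Subtype.coe_le_coe, e0, el, el1]
            constructor
            · rintro ⟨h, ⟨h1, h2⟩, h3, h4⟩
              exact ⟨⟨h1, h2⟩, h3, h⟩
            · rintro ⟨⟨h1, h2⟩, h3, h4⟩
              exact ⟨h4, ⟨h1, h2⟩, h3, by linarith [hstep l]⟩
          have hregion : Row l ∪ K l 0 = Row l ∪ (Icc (a 0) (a 0) ×ˢ Icc (a l) (a (l+1))) := by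
            ext z
            simp only [hRow_def, hK_def, mem_union, mem_setOf_eq, mem_prod, mem_Icc,
              ← Subtype.coe_le_coe, e0, el, el1, Nat.cast_zero, zero_div]
            constructor
            · rintro (h | ⟨h1, h2⟩)
              · exact Or.inl h
              · rcases le_total ((z.2 : I) : ℝ) (l / ν) with h' | h'
                · exact Or.inl h'
                · exact Or.inr ⟨⟨z.1.2.1, h1⟩, h', h2⟩
            · rintro (h | ⟨⟨h1, h2⟩, h3, h4⟩)
              · exact Or.inl h
              · exact Or.inr ⟨h2, h4⟩
          rw [hregion]
          exact step (Row l) 0 l hn0 hl (Icc (a 0) (a 0) ×ˢ Icc (a l) (a (l+1))) (hRow_closed l)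
            (prod_mono (Icc_subset_Icc le_rfl (ha_mono 0)) (Subset.refl _)) (hqclosed 0 0 l (l+1))
            (by rw [hoverlap]; exact prodIcc_preconn 0 0 l l) (a 0, a l)
            (by rw [hoverlap]; exact ⟨⟨le_rfl, le_rfl⟩, le_rfl, le_rfl⟩)
            (h00row l) hrow
        | succ k ihk =>
          intro hk1
          have hk : k < n := hk1
          have e_k : ((a k : ℝ)) = k / ν := hcoe k hk.le
          have e_k1 : ((a (k+1) : ℝ)) = ((k+1:ℕ):ℝ) / ν := hcoe (k+1) hk1
          have hoverlap : (Row l ∪ K l k) ∩ (Icc (a k) (a (k+1)) ×ˢ Icc (a l) (a (l+1)))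
              = (Icc (a k) (a (k+1)) ×ˢ Icc (a l) (a l))
                ∪ (Icc (a k) (a k) ×ˢ Icc (a l) (a (l+1))) := by
            ext z
            simp only [hRow_def, hK_def, mem_inter_iff, mem_union, mem_setOf_eq, mem_prod,
              mem_Icc, ← Subtype.coe_le_coe, e_k, e_k1, el, el1]
            constructor
            · rintro ⟨h | ⟨h1, h2⟩, ⟨hq1, hq2⟩, hq3, hq4⟩
              · exact Or.inl ⟨⟨hq1, hq2⟩, hq3, h⟩
              · exact Or.inr ⟨⟨hq1, h1⟩, hq3, hq4⟩
            · rintro (⟨⟨h1, h2⟩, h3, h4⟩ | ⟨⟨h1, h2⟩, h3, h4⟩)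
              · exact ⟨Or.inl h4, ⟨h1, h2⟩, h3, by linarith [hstep l]⟩
              · exact ⟨Or.inr ⟨h2, h4⟩, ⟨h1, by linarith [hstep k]⟩, h3, h4⟩
          have hregion : Row l ∪ K l (k+1)
              = (Row l ∪ K l k) ∪ (Icc (a k) (a (k+1)) ×ˢ Icc (a l) (a (l+1))) := by
            ext z
            simp only [hRow_def, hK_def, mem_union, mem_setOf_eq, mem_prod, mem_Icc,
              ← Subtype.coe_le_coe, e_k, e_k1, el, el1]
            constructor
            · rintro (h | ⟨h1, h2⟩)
              · exact Or.inl (Or.inl h)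
              · rcases le_total ((z.1 : I) : ℝ) ((k:ℝ) / ν) with h' | h'
                · exact Or.inl (Or.inr ⟨h', h2⟩)
                · rcases le_total ((z.2 : I) : ℝ) ((l:ℝ) / ν) with h'' | h''
                  · exact Or.inl (Or.inl h'')
                  · exact Or.inr ⟨⟨h', h1⟩, h'', h2⟩
            · rintro ((h | ⟨h1, h2⟩) | ⟨⟨h1, h2⟩, h3, h4⟩)
              · exact Or.inl h
              · exact Or.inr ⟨by linarith [hstep k], h2⟩
              · exact Or.inr ⟨h2, h4⟩
          rw [hregion]
          exact step (Row l ∪ K l k) k l hk hl (Icc (a k) (a (k+1)) ×ˢ Icc (a l) (a (l+1)))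
            ((hRow_closed l).union (hK_closed l k)) (Subset.refl _)
            (hqclosed k (k+1) l (l+1))
            (by
              rw [hoverlap]
              exact (prodIcc_preconn k (k+1) l l).union (a k, a l)
                ⟨⟨le_rfl, ha_mono k⟩, le_rfl, le_rfl⟩ ⟨⟨le_rfl, le_rfl⟩, le_rfl, ha_mono l⟩
                (prodIcc_preconn k k l (l+1)))
            (a k, a l)
            (by rw [hoverlap]; exact Or.inl ⟨⟨le_rfl, ha_mono k⟩, le_rfl, le_rfl⟩)
            (hz00 l k) (ihk hk.le)
      have hfin : Row (l+1) = Row l ∪ K l n := by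
        ext z
        simp only [hRow_def, hK_def, mem_union, mem_setOf_eq]
        constructor
        · intro h
          refine Or.inr ⟨?_, h⟩
          rw [div_self (ne_of_gt hν)]
          exact z.1.2.2
        · rintro (h | ⟨h1, h2⟩)
          · exact le_trans h (hstep l)
          · exact h2
      rw [hfin]
      exact inner n le_rfl
  obtain ⟨Γ, hΓc, hΓl, hΓ0⟩ := row n le_rfl
  have huniv : Row n = univ := by
    ext z
    simp only [hRow_def, mem_setOf_eq, mem_univ, iff_true]
    rw [div_self (ne_of_gt hν)]
    exact z.2.2.2
  refine ⟨Γ, ?_, ?_, hΓ0⟩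
  · rw [huniv] at hΓc
    exact continuousOn_univ.1 hΓc
  · intro z
    exact hΓl z (by rw [huniv]; exact mem_univ z)




theorem IsCoveringMap.exists_path_lift' (hp : IsCoveringMap p) {b₀ b₁ : B} (α : Path b₀ b₁)
    (e₀ : E) (he : p e₀ = b₀) :
    ∃ A : I → E, Continuous A ∧ (∀ t, p (A t) = α t) ∧ A 0 = e₀ := by
  obtain ⟨G, hGc, hGl, hG0⟩ := hp.exists_square_lift
    (α.toContinuousMap.comp ⟨Prod.snd, continuous_snd⟩) e₀ (by simpa using he)
  exact ⟨fun t => G (0, t), hGc.comp (continuous_const.prodMk continuous_id),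
    fun t => hGl (0, t), hG0⟩

/-- Lifts of a constant map are constant. -/
theorem IsCoveringMap.lift_const (hp : IsCoveringMap p) {A : I → E} (hA : Continuous A)
    (hconst : ∀ t, p (A t) = p (A 0)) (t : I) : A t = A 0 := by
  have := hp.eq_of_comp_eq hA continuous_const (funext fun s => hconst s) 0 rfl
  exact congrFun this t

/-- Monodromy: lifts of (rel endpoint) homotopic paths starting at the same point
end at the same point. -/
theorem IsCoveringMap.monodromy' (hp : IsCoveringMap p) {b₀ b₁ : B} {α β : Path b₀ b₁}
    (h : α.Homotopic β) {A B' : I → E} (hA : Continuous A) (hB : Continuous B')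
    (hAl : ∀ t, p (A t) = α t) (hBl : ∀ t, p (B' t) = β t) (h0 : A 0 = B' 0) : A 1 = B' 1 := by
  obtain ⟨F⟩ := h
  obtain ⟨G, hGc, hGl, hG0⟩ := hp.exists_square_lift F.toHomotopy.toContinuousMap (A 0)
    (by rw [hAl 0]; exact (F.apply_zero 0).symm)
  have hGl' : ∀ z : I × I, p (G z) = F z := hGl
  -- bottom edge of the lifted square is constant
  have hbot : ∀ s : I, G (s, 0) = G (0, 0) := by
    intro s
    refine hp.lift_const (hGc.comp (continuous_id.prodMk continuous_const)) (fun u => ?_) s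
    show p (G (u, 0)) = p (G ((0:I), (0:I)))
    rw [hGl', hGl']
    exact (F.source u).trans (F.source 0).symm
  -- top edge of the lifted square is constant
  have htop : ∀ s : I, G (s, 1) = G (0, 1) := by
    intro s
    refine hp.lift_const (hGc.comp (continuous_id.prodMk continuous_const)) (fun u => ?_) s
    show p (G (u, 1)) = p (G ((0:I), (1:I)))
    rw [hGl', hGl']
    exact (F.target u).trans (F.target 0).symm
  -- left edge is A
  have hleft : A = fun t => G (0, t) := by
    refine hp.eq_of_comp_eq hA (hGc.comp (continuous_const.prodMk continuous_id)) ?_ 0 hG0.symm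
    funext t
    show p (A t) = p (G (0, t))
    rw [hAl, hGl']
    exact (F.apply_zero t).symm
  -- right edge is B'
  have hright : B' = fun t => G (1, t) := by
    refine hp.eq_of_comp_eq hB (hGc.comp (continuous_const.prodMk continuous_id)) ?_ 0 ?_
    · funext t
      show p (B' t) = p (G (1, t))
      rw [hBl, hGl']
      exact (F.apply_one t).symm
    · rw [← h0, hbot 1, hG0]
  rw [hleft, hright]
  show G (0, 1) = G (1, 1)
  exact (htop 1).symm

end SquareLift

end CoveringLiftingAux

open FundamentalGroupoid

universe u

/-- The homomorphism induced on fundamental groups by a continuous map. -/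
noncomputable def inducedHom {A B : Type u} [TopologicalSpace A] [TopologicalSpace B]
    (f : A → B) (hf : Continuous f) (a : A) :
    Aut (FundamentalGroupoid.mk a) →* Aut (FundamentalGroupoid.mk (f a)) :=
  CategoryTheory.Functor.mapAut (⟨a⟩ : FundamentalGroupoid A)
    (FundamentalGroupoid.fundamentalGroupoidFunctor.map
      (show TopCat.of A ⟶ TopCat.of B from TopCat.ofHom ⟨f, hf⟩))

/-- The topological fiber product of `p : X → X'` and `π' : X̃' → X'`,
as a subspace of the product `X × X̃'`. -/
def FiberProduct {X X' Xc : Type u} (p : X → X') (π' : Xc → X') : Type u :=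
  { z : X × Xc // p z.1 = π' z.2 }

instance {X X' Xc : Type u} [TopologicalSpace X] [TopologicalSpace Xc]
    (p : X → X') (π' : Xc → X') : TopologicalSpace (FiberProduct p π') :=
  instTopologicalSpaceSubtype

/-- The first projection of the fiber product. -/
def FiberProduct.fst {X X' Xc : Type u} (p : X → X') (π' : Xc → X') :
    FiberProduct p π' → X :=
  fun z => z.val.1

theorem range_fst_pushforward_eq_ker {X X' Xc : Type u}
    [TopologicalSpace X] [TopologicalSpace X'] [TopologicalSpace Xc]
    (p : X → X') (π' : Xc → X') (hp : Continuous p) (hπ' : IsCoveringMap π')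
    [Nonempty Xc] [PathConnectedSpace Xc] [SimplyConnectedSpace Xc]
    (x₀t : FiberProduct p π') :
    MonoidHom.range
        (inducedHom (FiberProduct.fst p π')
          (continuous_fst.comp continuous_subtype_val) x₀t) =
      MonoidHom.ker (inducedHom p hp (x₀t.val.1)) := by
  have hπc : Continuous (FiberProduct.fst p π') :=
    continuous_fst.comp continuous_subtype_val
  set p2 : FiberProduct p π' → Xc := fun z => z.val.2 with hp2_def
  have hp2 : Continuous p2 := continuous_snd.comp continuous_subtype_val
  set pC : TopCat.of X ⟶ TopCat.of X' := TopCat.ofHom ⟨p, hp⟩ with hpC_def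
  set πC : TopCat.of (FiberProduct p π') ⟶ TopCat.of X := TopCat.ofHom ⟨FiberProduct.fst p π', hπc⟩
    with hπC_def
  set p2C : TopCat.of (FiberProduct p π') ⟶ TopCat.of Xc := TopCat.ofHom ⟨p2, hp2⟩ with hp2C_def
  set π'C : TopCat.of Xc ⟶ TopCat.of X' := TopCat.ofHom ⟨π', hπ'.continuous⟩ with hπ'C_def
  have hcomm : πC ≫ pC = p2C ≫ π'C := by
    apply TopCat.ext
    intro z
    exact z.prop
  ext g
  constructor
  · rintro ⟨h, rfl⟩
    refine MonoidHom.mem_ker.2 ?_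
    apply Iso.ext
    show (πₘ πC ≫ πₘ pC).map h.hom = 𝟙 _
    have hFG : πₘ πC ≫ πₘ pC = πₘ p2C ≫ πₘ π'C := by
      rw [← Functor.map_comp, ← Functor.map_comp, hcomm]
    rw [Functor.congr_hom hFG h.hom]
    have hsub : (πₘ p2C).map h.hom = 𝟙 ((πₘ p2C).obj ⟨x₀t⟩) :=
      @Subsingleton.elim _
        (inferInstanceAs (Subsingleton (Path.Homotopic.Quotient (p2 x₀t) (p2 x₀t)))) _ _
    show eqToHom _ ≫ (πₘ π'C).map ((πₘ p2C).map h.hom) ≫ eqToHom _ = 𝟙 _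
    rw [hsub]
    simp [CategoryTheory.Functor.map_id]
  · intro hg
    replace hg := MonoidHom.mem_ker.1 hg
    have hg' : (πₘ pC).map g.hom = 𝟙 (⟨p x₀t.val.1⟩ : FundamentalGroupoid X') :=
      congrArg Iso.hom hg
    obtain ⟨γ, hγ⟩ :=
      Quotient.exists_rep (g.hom : Path.Homotopic.Quotient x₀t.val.1 x₀t.val.1)
    have key : (⟦γ.map hp⟧ : Path.Homotopic.Quotient (p x₀t.val.1) (p x₀t.val.1))
        = ⟦Path.refl (p x₀t.val.1)⟧ := by
      have h1 : (⟦γ.map hp⟧ : Path.Homotopic.Quotient (p x₀t.val.1) (p x₀t.val.1))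
          = (πₘ pC).map g.hom := by
        exact congrArg (fun q => (πₘ pC).map q) hγ
      rw [h1, hg']
      rfl
    have hom1 : (γ.map hp).Homotopic (Path.refl (p x₀t.val.1)) := Quotient.exact key
    obtain ⟨A, hAc, hAl, hA0⟩ := hπ'.exists_path_lift' (γ.map hp) x₀t.val.2 x₀t.prop.symm
    have hA1 : A 1 = x₀t.val.2 := by
      refine hπ'.monodromy' hom1 hAc continuous_const hAl (fun t => x₀t.prop.symm) ?_
      rw [hA0]
    have hfib : ∀ t, p (γ t) = π' (A t) := fun t => (hAl t).symm
    set δ : Path x₀t x₀t :=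
      { toFun := fun t => ⟨(γ t, A t), hfib t⟩
        continuous_toFun := Continuous.subtype_mk (γ.continuous.prodMk hAc) _
        source' := Subtype.ext (Prod.ext γ.source hA0)
        target' := Subtype.ext (Prod.ext γ.target hA1) } with hδ_def
    refine ⟨(Groupoid.isoEquivHom _ _).symm
      (show FundamentalGroupoid.mk x₀t ⟶ FundamentalGroupoid.mk x₀t from ⟦δ⟧), ?_⟩
    apply Iso.ext
    show (πₘ πC).map (⟦δ⟧ : Path.Homotopic.Quotient x₀t x₀t) = g.hom
    refine Eq.trans ?_ hγ
    show (⟦δ.map hπc⟧ : Path.Homotopic.Quotient _ _) = ⟦γ⟧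
    apply congrArg
    apply Path.ext
    funext t
    rfl
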